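/- The geodesic growth function of Ĥ with respect to S = {a, a⁻¹, t} satisfies γ_S(n) ≤ Σ_{r=0}^{n} Σ_{k=0}^{7} 2^{k+1}·C(r,k) for all n ∈ ℕ; in particular, γ_S(n) is bounded above by a polynomial in n of degree 8. -/

import Mathlib

/-- The three generators `a, b, t` of the virtually Heisenberg group `Ĥ`. -/
inductive VGen : Type
  | a | b | t
deriving DecidableEq

open scoped commutatorElement

/-- Relators of the virtually Heisenberg group
`Ĥ = ⟨a,b,t ∣ [a,[a,b]] = [b,[a,b]] = t² = 1, tat = b⟩`. -/
def VRels : Set (FreeGroup VGen) :=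
  { ⁅FreeGroup.of VGen.a, ⁅FreeGroup.of VGen.a, FreeGroup.of VGen.b⁆⁆,
    ⁅FreeGroup.of VGen.b, ⁅FreeGroup.of VGen.a, FreeGroup.of VGen.b⁆⁆,
    FreeGroup.of VGen.t ^ 2,
    FreeGroup.of VGen.t * FreeGroup.of VGen.a * FreeGroup.of VGen.t *
      (FreeGroup.of VGen.b)⁻¹ }

/-- The virtually Heisenberg group `Ĥ`. -/
abbrev VH : Type := PresentedGroup VRels

/-- The generator `a` of `Ĥ`. -/
def Va : VH := PresentedGroup.of VGen.a

/-- The generator `b` of `Ĥ`. -/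
def Vb : VH := PresentedGroup.of VGen.b

/-- The generator `t` of `Ĥ`. -/
def Vt : VH := PresentedGroup.of VGen.t

/-- The three letters of the alphabet `S = {a, a⁻¹, t}`. -/
inductive SLetter : Type
  | a | A | t
deriving DecidableEq

/-- The element of `Ĥ` represented by a letter of `S`. -/
def SLetter.toV : SLetter → VH
  | .a => Va
  | .A => Va⁻¹
  | .t => Vt

/-- The element of `Ĥ` represented by a word over `S`. -/
def evalS (w : List SLetter) : VH := (w.map SLetter.toV).prod

/-- The word `a^k` over `S`, for `k ∈ ℤ`. -/
def apowS (k : ℤ) : List SLetter :=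
  if 0 ≤ k then List.replicate k.toNat SLetter.a else List.replicate (-k).toNat SLetter.A

/-- The word length `ℓ_S(g)` of `g ∈ Ĥ` with respect to `S`. -/
noncomputable def lenS (g : VH) : ℕ :=
  sInf { n | ∃ w : List SLetter, evalS w = g ∧ w.length = n }

/-- A word over `S` is geodesic if its length equals the word length of the
element it represents. -/
def IsGeodesicS (w : List SLetter) : Prop := w.length = lenS (evalS w)

/-- The geodesic growth function `γ_S` of `Ĥ` with respect to `S = {a, a⁻¹, t}`:
the number of geodesic words over `S` of length at most `n`. -/
noncomputable def geodesicGrowthS (n : ℕ) : ℕ :=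
  Set.ncard { w : List SLetter | IsGeodesicS w ∧ w.length ≤ n }

/-!
Every element of `Ĥ` has the form `z^c a^x b^q t^ε`, where `z = [a, b]` commutes with `a` and `b`,
and `t a^n t = b^n`. Reading a word letter by letter, a letter `a^{±1}` at even `t`-parity changes
`x` by `±1` and `c` by `∓q`, while one at odd parity changes `q` by `±1`. Let `U`, `V` count the
even-parity letters `a`, `a⁻¹`, let `B` count the odd-parity ones, and let `q` have ranged over
`[-lo, hi]`. Then `-(U·hi + V·lo) ≤ c ≤ V·hi + U·lo`, and `B ≥ 2(hi + lo) - |q|` since `q` went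
up to `hi`, down to `-lo` and back. These bounds are enough to reach the same `(c, x, q, ε)` with
a word having at most seven `t`s and at most `U + V + B` other letters, so a geodesic has at most
seven `t`s. A geodesic is freely reduced, so with `k` letters `t` it is determined by the lengths
and signs of its `k + 1` blocks of `a^{±1}`: at most `2^{k+1} C(r, k)` geodesics have length `r`.
-/

theorem commutatorElement_zpow_right_of_commute {G : Type*} [Group G] {a b : G}
    (h : Commute b ⁅a, b⁆) (m : ℤ) : ⁅a, b ^ m⁆ = ⁅a, b⁆ ^ m := by
  have hconj : SemiconjBy a b (⁅a, b⁆ * b) := by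
    rw [SemiconjBy, commutatorElement_def]; group
  have := (hconj.zpow_right m).eq
  rw [h.symm.mul_zpow] at this
  rw [commutatorElement_def, this]; group

theorem commutatorElement_zpow_zpow_of_commute {G : Type*} [Group G] {a b : G}
    (ha : Commute a ⁅a, b⁆) (hb : Commute b ⁅a, b⁆) (n m : ℤ) :
    ⁅a ^ n, b ^ m⁆ = ⁅a, b⁆ ^ (n * m) := by
  have hn : ⁅a ^ n, b⁆ = ⁅a, b⁆ ^ n := by
    have hba : Commute a ⁅b, a⁆ := by rw [← commutatorElement_inv]; exact ha.inv_right
    rw [← commutatorElement_inv, commutatorElement_zpow_right_of_commute hba,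
      ← commutatorElement_inv, inv_zpow, inv_inv]
  rw [commutatorElement_zpow_right_of_commute (by rw [hn]; exact hb.zpow_right n), hn, zpow_mul]

namespace VH

noncomputable def Vz : VH := ⁅Va, Vb⁆

theorem mk_eq_one_of_mem_VRels {r : FreeGroup VGen} (h : r ∈ VRels) :
    PresentedGroup.mk VRels r = 1 :=
  (QuotientGroup.eq_one_iff r).mpr (Subgroup.subset_normalClosure h)

theorem Va_commute_Vz : Commute Va Vz := by
  have := mk_eq_one_of_mem_VRels (show _ ∈ VRels from Or.inl rfl)
  simp only [map_commutatorElement] at this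
  exact commutatorElement_eq_one_iff_commute.mp this

theorem Vb_commute_Vz : Commute Vb Vz := by
  have := mk_eq_one_of_mem_VRels (show _ ∈ VRels from Or.inr (Or.inl rfl))
  simp only [map_commutatorElement] at this
  exact commutatorElement_eq_one_iff_commute.mp this

theorem Vt_mul_Vt : Vt * Vt = 1 := by
  have := mk_eq_one_of_mem_VRels (show _ ∈ VRels from Or.inr (Or.inr (Or.inl rfl)))
  rwa [map_pow, sq] at this

theorem Vt_mul_Va_mul_Vt : Vt * Va * Vt = Vb := by
  have := mk_eq_one_of_mem_VRels (show _ ∈ VRels from Or.inr (Or.inr (Or.inr rfl)))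
  simp only [map_mul, map_inv] at this
  exact mul_inv_eq_one.mp this

theorem Vt_mul_Va_zpow (n : ℤ) : Vt * Va ^ n = Vb ^ n * Vt := by
  have hinv : Vt⁻¹ = Vt := inv_eq_of_mul_eq_one_right Vt_mul_Vt
  have := map_zpow (MulAut.conj Vt) Va n
  simp only [MulAut.conj_apply, hinv, Vt_mul_Va_mul_Vt] at this
  rw [← this, mul_assoc, Vt_mul_Vt, mul_one]

theorem Vb_zpow_mul_Va_zpow (m n : ℤ) : Vb ^ m * Va ^ n = Vz ^ (-(n * m)) * Va ^ n * Vb ^ m := by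
  have := commutatorElement_zpow_zpow_of_commute Va_commute_Vz Vb_commute_Vz n m
  rw [commutatorElement_def, ← Vz] at this
  rw [zpow_neg, ← this]; group

noncomputable def nf (c x q : ℤ) : VH := Vz ^ c * Va ^ x * Vb ^ q

theorem nf_mul_Va_zpow (c x q n : ℤ) : nf c x q * Va ^ n = nf (c - n * q) (x + n) q := by
  simp only [nf, mul_assoc, Vb_zpow_mul_Va_zpow]
  rw [← mul_assoc (Va ^ x), ((Va_commute_Vz.zpow_zpow x _).eq), sub_eq_add_neg, zpow_add, zpow_add]
  group

theorem nf_mul_Vb_zpow (c x q m : ℤ) : nf c x q * Vb ^ m = nf c x (q + m) := by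
  simp only [nf, mul_assoc, zpow_add]

end VH

open VH

def SLetter.inv : SLetter → SLetter
  | .a => .A
  | .A => .a
  | .t => .t

theorem SLetter.toV_mul_toV_inv (x : SLetter) : x.toV * x.inv.toV = 1 := by
  cases x <;> simp [SLetter.inv, SLetter.toV, Vt_mul_Vt]

@[simp] theorem evalS_nil : evalS [] = 1 := rfl

@[simp] theorem evalS_cons (x : SLetter) (w : List SLetter) : evalS (x :: w) = x.toV * evalS w :=
  List.prod_cons

@[simp] theorem evalS_append (u v : List SLetter) : evalS (u ++ v) = evalS u * evalS v := by
  simp [evalS]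

@[simp] theorem evalS_apowS (k : ℤ) : evalS (apowS k) = Va ^ k := by
  unfold apowS evalS
  split_ifs with hk
  · simp [← zpow_natCast, Int.toNat_of_nonneg hk, SLetter.toV]
  · simp [← zpow_natCast, Int.toNat_of_nonneg (by omega : 0 ≤ -k), SLetter.toV]

@[simp] theorem length_apowS (k : ℤ) : (apowS k).length = k.natAbs := by
  unfold apowS; split <;> simp <;> omega

/-- The state after reading a word letter by letter: the word represents `nf c (U - V) q`,
followed by `Vt` if `odd`, where `U` and `V` count the letters `a` and `a⁻¹` read at even
`t`-parity and `B` the letters `a^{±1}` read at odd parity, during which `q` stays in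
`[-lo, hi]`. -/
structure Scan where
  U : ℤ
  V : ℤ
  B : ℤ
  q : ℤ
  c : ℤ
  hi : ℤ
  lo : ℤ
  odd : Bool

namespace Scan

def init : Scan := ⟨0, 0, 0, 0, 0, 0, 0, false⟩

def step (s : Scan) : SLetter → Scan
  | .a => if s.odd then { s with B := s.B + 1, q := s.q + 1, hi := max s.hi (s.q + 1) }
          else { s with U := s.U + 1, c := s.c - s.q }
  | .A => if s.odd then { s with B := s.B + 1, q := s.q - 1, lo := max s.lo (1 - s.q) }
          else { s with V := s.V + 1, c := s.c + s.q }
  | .t => { s with odd := !s.odd }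

noncomputable def val (s : Scan) : VH := nf s.c (s.U - s.V) s.q * cond s.odd Vt 1

theorem val_step (s : Scan) (x : SLetter) : (s.step x).val = s.val * x.toV := by
  have ha := nf_mul_Va_zpow s.c (s.U - s.V) s.q 1
  have hA := nf_mul_Va_zpow s.c (s.U - s.V) s.q (-1)
  have hb := nf_mul_Vb_zpow s.c (s.U - s.V) s.q 1
  have hB := nf_mul_Vb_zpow s.c (s.U - s.V) s.q (-1)
  have hta := Vt_mul_Va_zpow 1
  have htA := Vt_mul_Va_zpow (-1)
  simp only [zpow_one, zpow_neg_one] at ha hA hb hB hta htA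
  cases x <;> cases h : s.odd <;>
    simp only [step, val, h, SLetter.toV, cond_true, cond_false, mul_one, mul_assoc, Vt_mul_Vt,
      hta, htA, Bool.not_true, Bool.not_false, ite_true, ite_false, Bool.false_eq_true]
  · rw [ha]; ring_nf
  · rw [← mul_assoc, hb]
  · rw [hA]; ring_nf
  · rw [← mul_assoc, hB]; ring_nf

def Bounded (s : Scan) : Prop :=
  0 ≤ s.U ∧ 0 ≤ s.V ∧ 0 ≤ s.hi ∧ 0 ≤ s.lo ∧ s.q ≤ s.hi ∧ -s.q ≤ s.lo ∧
    2 * (s.hi + s.lo) - |s.q| ≤ s.B ∧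
    -(s.U * s.hi + s.V * s.lo) ≤ s.c ∧ s.c ≤ s.V * s.hi + s.U * s.lo

theorem bounded_init : init.Bounded := by simp [Bounded, init]

theorem Bounded.step {s : Scan} (hs : s.Bounded) (x : SLetter) : (s.step x).Bounded := by
  obtain ⟨hU, hV, hhi, hlo, hqhi, hqlo, hB, hc₁, hc₂⟩ := hs
  rw [abs_eq_max_neg] at hB
  cases x <;> cases h : s.odd <;>
    simp only [Scan.step, h, Bounded, abs_eq_max_neg, ite_true, ite_false, Bool.false_eq_true]
  · exact ⟨by omega, hV, hhi, hlo, hqhi, hqlo, hB, by nlinarith, by nlinarith⟩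
  · have : s.U * s.hi ≤ s.U * max s.hi (s.q + 1) := by gcongr; exact le_max_left _ _
    have : s.V * s.hi ≤ s.V * max s.hi (s.q + 1) := by gcongr; exact le_max_left _ _
    exact ⟨hU, hV, by omega, hlo, by omega, by omega, by omega, by linarith, by linarith⟩
  · exact ⟨hU, by omega, hhi, hlo, hqhi, hqlo, hB, by nlinarith, by nlinarith⟩
  · have : s.U * s.lo ≤ s.U * max s.lo (1 - s.q) := by gcongr; exact le_max_left _ _
    have : s.V * s.lo ≤ s.V * max s.lo (1 - s.q) := by gcongr; exact le_max_left _ _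
    exact ⟨hU, hV, hhi, by omega, by omega, by omega, by omega, by linarith, by linarith⟩
  all_goals exact ⟨hU, hV, hhi, hlo, hqhi, hqlo, hB, hc₁, hc₂⟩

theorem size_step (s : Scan) (x : SLetter) :
    (s.step x).U + (s.step x).V + (s.step x).B = s.U + s.V + s.B + if x = .t then 0 else 1 := by
  cases x <;> cases h : s.odd <;> simp [Scan.step, h] <;> ring

end Scan

def scan (w : List SLetter) : Scan := w.foldl Scan.step Scan.init

theorem scan_append_singleton (w : List SLetter) (x : SLetter) :
    scan (w ++ [x]) = (scan w).step x := by
  simp [scan]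

theorem evalS_eq_val_scan (w : List SLetter) : evalS w = (scan w).val := by
  induction w using List.reverseRecOn with
  | nil => simp [scan, Scan.init, Scan.val, nf]
  | append_singleton w x ih => rw [evalS_append, ih, scan_append_singleton, Scan.val_step]; simp

theorem bounded_scan (w : List SLetter) : (scan w).Bounded := by
  induction w using List.reverseRecOn with
  | nil => exact Scan.bounded_init
  | append_singleton w x ih => rw [scan_append_singleton]; exact ih.step x

theorem scan_size (w : List SLetter) :
    (scan w).U + (scan w).V + (scan w).B + w.count .t = w.length := by
  induction w using List.reverseRecOn with
  | nil => simp [scan, Scan.init]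
  | append_singleton w x ih =>
    rw [scan_append_singleton, Scan.size_step, List.count_append, List.length_append]
    cases x <;> simp <;> omega

theorem exists_mul_add_mul_eq_of_le_mul {C T K : ℤ} (hT : 0 ≤ T) (hK : 0 ≤ K) (hC : 0 ≤ C)
    (hCK : C ≤ K * T) :
    ∃ u w r : ℤ, 0 ≤ u ∧ 0 ≤ w ∧ w ≤ 1 ∧ 0 ≤ r ∧ r ≤ T ∧ u + w ≤ K ∧ u * T + w * r = C := by
  rcases hT.eq_or_lt with rfl | hT
  · exact ⟨0, 0, 0, le_rfl, le_rfl, zero_le_one, le_rfl, le_rfl, by simpa using hK, by linarith⟩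
  have hdiv := Int.ediv_mul_add_emod C T
  have hr₀ := Int.emod_nonneg C hT.ne'
  have hrT := Int.emod_lt_of_pos C hT
  have hu := Int.ediv_nonneg hC hT.le
  rcases hr₀.eq_or_lt with hr | hr
  · have : C / T ≤ K := le_of_mul_le_mul_right (by linarith) hT
    exact ⟨C / T, 0, C % T, hu, le_rfl, zero_le_one, hr₀, hrT.le, by linarith, by linarith⟩
  · have : C / T < K := lt_of_mul_lt_mul_right (by linarith) hT.le
    exact ⟨C / T, 1, C % T, hu, zero_le_one, le_rfl, hr₀, hrT.le, by linarith, by linarith⟩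

/-- `C` is the area `x₂ Y₁ + x₃ Y₂ + x₄ q` swept by a word
`a^{x₁} t a^{Y₁} t a^{x₂} t a^{Y₂ - Y₁} t a^{x₃} t a^{q - Y₂} t a^{x₄}`
(see `shortWord`) with `x₁ + x₂ + x₃ + x₄ = U - V` that has at most `U + V` letters `a^{±1}` at
even and at most `B` at odd `t`-parity. -/
def Realizable (U V B q C : ℤ) : Prop :=
  ∃ x₂ x₃ x₄ Y₁ Y₂ : ℤ,
    |U - V - (x₂ + x₃ + x₄)| + |x₂| + |x₃| + |x₄| ≤ U + V ∧
    |Y₁| + |Y₂ - Y₁| + |q - Y₂| ≤ B ∧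
    x₂ * Y₁ + x₃ * Y₂ + x₄ * q = C

theorem Realizable.swap {U V B q C : ℤ} (h : Realizable U V B q C) : Realizable V U B q (-C) := by
  obtain ⟨x₂, x₃, x₄, Y₁, Y₂, hx, hY, hC⟩ := h
  refine ⟨-x₂, -x₃, -x₄, Y₁, Y₂, ?_, hY, by linear_combination -hC⟩
  rw [show V - U - (-x₂ + -x₃ + -x₄) = -(U - V - (x₂ + x₃ + x₄)) by ring]
  simp only [abs_neg]
  linarith

theorem Realizable.neg {U V B q C : ℤ} (h : Realizable U V B q C) :
    Realizable U V B (-q) (-C) := by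
  obtain ⟨x₂, x₃, x₄, Y₁, Y₂, hx, hY, hC⟩ := h
  refine ⟨x₂, x₃, x₄, -Y₁, -Y₂, hx, ?_, by linear_combination -hC⟩
  rw [show -Y₂ - -Y₁ = -(Y₂ - Y₁) by ring, show -q - -Y₂ = -(q - Y₂) by ring]
  simpa only [abs_neg] using hY

theorem realizable_of_nonneg {U V M d B q C : ℤ} (hU : 0 ≤ U) (hV : 0 ≤ V) (hM : 0 ≤ M)
    (hd : 0 ≤ d) (hqM : q ≤ M) (hB : 2 * (M + d) - q ≤ B) (hC : 0 ≤ C)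
    (hCle : C ≤ U * M + V * d) : Realizable U V B q C := by
  by_cases hCT : C ≤ U * (M + d)
  · obtain ⟨u, w, r, hu, hw, -, hr, hrT, huw, rfl⟩ :=
      exists_mul_add_mul_eq_of_le_mul (by linarith) hU hC hCT
    refine ⟨w, u, 0, r, M + d, ?_, ?_, by ring⟩
    · rw [abs_of_nonneg hw, abs_of_nonneg hu, abs_zero]
      rcases abs_cases (U - V - (w + u + 0)) with ⟨h, -⟩ | ⟨h, -⟩ <;> linarith
    · rw [abs_of_nonneg hr, abs_of_nonneg (by linarith : 0 ≤ M + d - r),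
        abs_of_nonpos (by linarith : q - (M + d) ≤ 0)]
      linarith
  -- Otherwise `U ≤ V`: the `U` letters `a` go at height `q`, the rest of the area is made by
  -- letters `a⁻¹` at negative heights.
  have hUV : U ≤ V := by nlinarith
  have hrest : C - U * q ≤ V * (M + d - q) := by
    nlinarith [mul_le_mul_of_nonneg_right hUV (sub_nonneg.mpr hqM)]
  obtain ⟨u, w, r, hu, hw, -, hr, hrT, huw, hsum⟩ :=
    exists_mul_add_mul_eq_of_le_mul (by linarith) hV (by nlinarith) hrest
  refine ⟨-w, -u, U, -r, -(M + d - q), ?_, ?_, by linear_combination hsum⟩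
  · simp only [abs_neg]
    rw [abs_of_nonneg hw, abs_of_nonneg hu, abs_of_nonneg hU]
    rcases abs_cases (U - V - (-w + -u + U)) with ⟨h, -⟩ | ⟨h, -⟩ <;> linarith
  · rw [show -(M + d - q) - -r = -(M + d - q - r) by ring, abs_neg, abs_neg,
      abs_of_nonneg hr, abs_of_nonneg (by linarith : 0 ≤ M + d - q - r),
      abs_of_nonneg (by linarith : 0 ≤ q - -(M + d - q))]
    linarith

theorem realizable_of_bounds {U V M d B q C : ℤ} (hU : 0 ≤ U) (hV : 0 ≤ V) (hM : 0 ≤ M)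
    (hd : 0 ≤ d) (hqM : q ≤ M) (hqd : -q ≤ d) (hB : 2 * (M + d) - |q| ≤ B)
    (hC₁ : -(V * M + U * d) ≤ C) (hC₂ : C ≤ U * M + V * d) : Realizable U V B q C := by
  have key : ∀ {M d q C : ℤ}, 0 ≤ M → 0 ≤ d → q ≤ M → 2 * (M + d) - q ≤ B →
      -(V * M + U * d) ≤ C → C ≤ U * M + V * d → Realizable U V B q C := by
    intro M d q C hM hd hqM hB hC₁ hC₂
    rcases le_total 0 C with hC | hC
    · exact realizable_of_nonneg hU hV hM hd hqM hB hC hC₂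
    · simpa using (realizable_of_nonneg hV hU hM hd hqM hB (neg_nonneg.mpr hC)
        (by linarith)).swap
  rcases le_total 0 q with hq | hq
  · exact key hM hd hqM (by rwa [abs_of_nonneg hq] at hB) hC₁ hC₂
  · simpa using (key (C := -C) hd hM hqd
      (by rw [abs_of_nonpos hq] at hB; linarith) (by linarith) (by linarith)).neg

def shortWord (x₁ x₂ x₃ x₄ Y₁ Y₂ q : ℤ) : List SLetter :=
  apowS x₁ ++ .t :: apowS Y₁ ++ .t :: apowS x₂ ++ .t :: apowS (Y₂ - Y₁) ++ .t :: apowS x₃ ++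
    .t :: apowS (q - Y₂) ++ .t :: apowS x₄

theorem evalS_shortWord (x₁ x₂ x₃ x₄ Y₁ Y₂ q : ℤ) :
    evalS (shortWord x₁ x₂ x₃ x₄ Y₁ Y₂ q) =
      nf (-(x₂ * Y₁ + x₃ * Y₂ + x₄ * q)) (x₁ + x₂ + x₃ + x₄) q := by
  have hconj (n : ℤ) (g : VH) : Vt * (Va ^ n * (Vt * g)) = Vb ^ n * g := by
    rw [← mul_assoc, Vt_mul_Va_zpow, mul_assoc, ← mul_assoc Vt, Vt_mul_Vt, one_mul]
  have hstart : Va ^ x₁ = nf 0 x₁ 0 := by simp [nf]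
  simp only [shortWord, evalS_append, evalS_cons, evalS_apowS, SLetter.toV, mul_assoc, hconj]
  simp only [← mul_assoc, hstart, nf_mul_Va_zpow, nf_mul_Vb_zpow]
  ring_nf

theorem length_shortWord (x₁ x₂ x₃ x₄ Y₁ Y₂ q : ℤ) :
    ((shortWord x₁ x₂ x₃ x₄ Y₁ Y₂ q).length : ℤ) =
      |x₁| + |x₂| + |x₃| + |x₄| + |Y₁| + |Y₂ - Y₁| + |q - Y₂| + 6 := by
  simp only [shortWord, List.length_append, List.length_cons, length_apowS]
  push_cast [Int.natCast_natAbs]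
  ring

theorem exists_evalS_eq_length_add_count_le (w : List SLetter) :
    ∃ w' : List SLetter, evalS w' = evalS w ∧ w'.length + w.count .t ≤ w.length + 7 := by
  obtain ⟨hU, hV, hhi, hlo, hqhi, hqlo, hB, hc₁, hc₂⟩ := bounded_scan w
  obtain ⟨x₂, x₃, x₄, Y₁, Y₂, hxlen, hYlen, harea⟩ :=
    realizable_of_bounds (C := -(scan w).c) hU hV hhi hlo hqhi hqlo hB (by linarith) (by linarith)
  set x₁ := (scan w).U - (scan w).V - (x₂ + x₃ + x₄)
  refine ⟨shortWord x₁ x₂ x₃ x₄ Y₁ Y₂ (scan w).q ++ cond (scan w).odd [.t] [], ?_, ?_⟩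
  · have hc : -(x₂ * Y₁ + x₃ * Y₂ + x₄ * (scan w).q) = (scan w).c := by linarith
    have hx : x₁ + x₂ + x₃ + x₄ = (scan w).U - (scan w).V := by ring
    rw [evalS_append, evalS_shortWord, evalS_eq_val_scan w, Scan.val, hc, hx]
    cases (scan w).odd <;> simp [SLetter.toV]
  · have hsize := scan_size w
    have hlen := length_shortWord x₁ x₂ x₃ x₄ Y₁ Y₂ (scan w).q
    have hodd : (cond (scan w).odd [SLetter.t] []).length ≤ 1 := by cases (scan w).odd <;> simp
    rw [List.length_append]
    omega

theorem lenS_le_length (w : List SLetter) : lenS (evalS w) ≤ w.length :=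
  Nat.sInf_le ⟨w, rfl, rfl⟩

theorem IsGeodesicS.length_le {w w' : List SLetter} (hw : IsGeodesicS w)
    (h : evalS w' = evalS w) : w.length ≤ w'.length := by
  rw [hw, ← h]
  exact lenS_le_length w'

theorem IsGeodesicS.count_t_le {w : List SLetter} (hw : IsGeodesicS w) : w.count .t ≤ 7 := by
  obtain ⟨w', hval, hlen⟩ := exists_evalS_eq_length_add_count_le w
  have := hw.length_le hval
  omega

theorem IsGeodesicS.isChain {w : List SLetter} (hw : IsGeodesicS w) :
    w.IsChain fun x y => y ≠ x.inv := by
  refine List.isChain_iff_forall_rel_of_append_cons_cons.mpr fun x y u v hsplit hy => ?_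
  have hval : evalS (u ++ v) = evalS w := by
    simp [hsplit, hy, ← mul_assoc, x.toV_mul_toV_inv]
  have := hw.length_le hval
  simp [hsplit] at this

theorem eq_replicate_of_isChain_of_t_notMem {w : List SLetter}
    (hw : w.IsChain fun x y => y ≠ x.inv) (ht : .t ∉ w) :
    ∃ x ∈ ({.a, .A} : Finset SLetter), w = List.replicate w.length x := by
  have hne : ∀ x ∈ w, x ∈ ({.a, .A} : Finset SLetter) := by
    intro x hx; cases x <;> simp_all
  have heq : w.IsChain (· = ·) := hw.imp_of_mem_imp fun x y hx hy hxy => by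
    have := hne x hx; have := hne y hy
    cases x <;> cases y <;> simp_all [SLetter.inv]
  cases w with
  | nil => exact ⟨.a, by simp, rfl⟩
  | cons x w => exact ⟨x, hne x (by simp), List.isChain_eq_iff_eq_replicate.mp heq x rfl⟩

theorem sum_range_choose_eq_choose_succ (r k : ℕ) :
    ∑ i ∈ Finset.range r, i.choose k = r.choose (k + 1) := by
  induction r with
  | zero => simp
  | succ r ih => rw [Finset.sum_range_succ, ih, Nat.choose_succ_succ' r k, add_comm]

/-- Words of length `r` made of `k + 1` blocks `a^j` or `a^{-j}` separated by single letters `t`. -/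
def blockWords : ℕ → ℕ → Finset (List SLetter)
  | 0, r => ({.a, .A} : Finset SLetter).image (List.replicate r)
  | k + 1, r => (Finset.range r).biUnion fun j => ({.a, .A} : Finset SLetter).biUnion fun x =>
      (blockWords k (r - 1 - j)).image (List.replicate j x ++ .t :: ·)

theorem card_blockWords_le (k r : ℕ) : (blockWords k r).card ≤ 2 ^ (k + 1) * r.choose k := by
  induction k generalizing r with
  | zero => exact (Finset.card_image_le).trans (by simp)
  | succ k ih =>
    calc (blockWords (k + 1) r).card
        ≤ ∑ j ∈ Finset.range r, ∑ _x ∈ ({.a, .A} : Finset SLetter),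
            (blockWords k (r - 1 - j)).card :=
          Finset.card_biUnion_le.trans <| Finset.sum_le_sum fun j _ =>
            Finset.card_biUnion_le.trans <| Finset.sum_le_sum fun x _ => Finset.card_image_le
      _ ≤ ∑ j ∈ Finset.range r, 2 ^ (k + 2) * (r - 1 - j).choose k := by
          refine Finset.sum_le_sum fun j _ => ?_
          rw [Finset.sum_const, Finset.card_pair (by decide), smul_eq_mul, pow_succ]
          linarith [ih (r - 1 - j)]
      _ = 2 ^ (k + 2) * r.choose (k + 1) := by
          rw [← Finset.mul_sum, Finset.sum_range_reflect (fun i => i.choose k) r,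
            sum_range_choose_eq_choose_succ]

theorem mem_blockWords {w : List SLetter} (hw : w.IsChain fun x y => y ≠ x.inv) :
    w ∈ blockWords (w.count .t) w.length := by
  induction h : w.count .t generalizing w with
  | zero =>
    obtain ⟨x, hx, hrep⟩ := eq_replicate_of_isChain_of_t_notMem hw (List.count_eq_zero.mp h)
    exact Finset.mem_image.mpr ⟨x, hx, hrep.symm⟩
  | succ k ih =>
    obtain ⟨u, v, hu, rfl, -⟩ := List.exists_erase_eq (List.count_pos_iff.mp (by omega) : .t ∈ w)
    obtain ⟨x, hx, hrep⟩ := eq_replicate_of_isChain_of_t_notMem hw.left_of_append hu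
    have hv : v.count .t = k := by simp [List.count_append, List.count_eq_zero.mpr hu] at h; omega
    simp only [blockWords, Finset.mem_biUnion, Finset.mem_range, Finset.mem_image]
    refine ⟨u.length, by simp, x, hx, v, ?_, by rw [← hrep]⟩
    have := ih hw.right_of_append.tail hv
    simpa [Nat.add_sub_cancel_left] using this

theorem geodesicGrowthS_le_sum (n : ℕ) :
    geodesicGrowthS n ≤
      ∑ r ∈ Finset.range (n + 1), ∑ k ∈ Finset.range 8, 2 ^ (k + 1) * r.choose k := by
  set T := (Finset.range (n + 1)).biUnion fun r => (Finset.range 8).biUnion fun k => blockWords k r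
  have hsub : {w : List SLetter | IsGeodesicS w ∧ w.length ≤ n} ⊆ T := by
    rintro w ⟨hw, hn⟩
    simp only [T, Finset.coe_biUnion, Finset.coe_range, Set.mem_iUnion, Set.mem_Iio,
      Finset.mem_coe]
    exact ⟨w.length, by omega, w.count .t, by have := hw.count_t_le; omega,
      mem_blockWords hw.isChain⟩
  calc geodesicGrowthS n ≤ T.card := (Set.ncard_le_ncard hsub T.finite_toSet).trans_eq
        (Set.ncard_coe_finset T)
    _ ≤ ∑ r ∈ Finset.range (n + 1), ∑ k ∈ Finset.range 8, (blockWords k r).card :=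
        Finset.card_biUnion_le.trans (Finset.sum_le_sum fun r _ => Finset.card_biUnion_le)
    _ ≤ _ := Finset.sum_le_sum fun r _ => Finset.sum_le_sum fun k _ => card_blockWords_le k r

theorem sum_range_sum_choose_le (n : ℕ) :
    ∑ r ∈ Finset.range (n + 1), ∑ k ∈ Finset.range 8, 2 ^ (k + 1) * r.choose k ≤
      2048 * (n + 1) ^ 8 := by
  have hterm : ∀ r ∈ Finset.range (n + 1), ∀ k ∈ Finset.range 8,
      2 ^ (k + 1) * r.choose k ≤ 256 * (n + 1) ^ 7 := by
    intro r hr k hk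
    simp only [Finset.mem_range] at hr hk
    gcongr
    · exact Nat.pow_le_pow_right (by norm_num : 0 < 2) (by omega : k + 1 ≤ 8)
    · calc r.choose k ≤ r ^ k := Nat.choose_le_pow r k
        _ ≤ (n + 1) ^ 7 := (Nat.pow_le_pow_left (by omega) k).trans
            (Nat.pow_le_pow_right (by omega) (by omega))
  calc _ ≤ ∑ _r ∈ Finset.range (n + 1), 8 * (256 * (n + 1) ^ 7) :=
        Finset.sum_le_sum fun r hr => by
          simpa using Finset.sum_le_card_nsmul _ _ _ (hterm r hr)
    _ = 2048 * (n + 1) ^ 8 := by simp; ring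

/-- `γ_S(n) ≤ Σ_{r=0}^{n} Σ_{k=0}^{7} 2^{k+1}·C(r,k)` for all `n`; in
particular `γ_S` is bounded above by a polynomial of degree 8. -/
theorem geodesic_growth_polynomial_bound :
    (∀ n : ℕ, geodesicGrowthS n ≤
      ∑ r ∈ Finset.range (n + 1), ∑ k ∈ Finset.range 8, 2 ^ (k + 1) * r.choose k) ∧
    ∃ p : Polynomial ℕ, p.natDegree = 8 ∧ ∀ n : ℕ, geodesicGrowthS n ≤ p.eval n := by
  refine ⟨geodesicGrowthS_le_sum, Polynomial.C 2048 * (Polynomial.X + 1) ^ 8,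
    by compute_degree!, fun n => ?_⟩
  simpa using (geodesicGrowthS_le_sum n).trans (sum_range_sum_choose_le n)
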